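/- arXiv:2102.03559 — 2 statements merged into one kernel-verified Lean document; each statement's English description precedes it below -/
import Mathlib

section
/- For the van der Waals gas, there exists τ₁ > b such that for all τ > τ₁ the quantity κ(τ) = −2p'(τ)/(2p'(τ)+τ p''(τ)) is positive, where p(τ) = K/(τ−b)^{γ+1} − a/τ² with K, a, b > 0, γ ∈ (0,1). -/
/-!
With `s = τ - b`, one computes `2p' + τp'' = K(γ+1)(γτ + 2b)/s^(γ+3) - 2a/τ³`, so both `-p'(τ) > 0`
and `2p' + τp'' > 0` follow from the single estimate `2a s^(γ+2) < Kγ(γ+1) τ³`, using `γ < 1` for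
the first and `s ≤ τ`, `b ≥ 0` for the second. That estimate holds for large `τ` because
`s^(γ+2) ≤ τ^(γ+2)` and `γ + 2 < 3`.
-/

open Filter Real

lemma eventually_mul_sub_rpow_lt_mul_pow {b c C r : ℝ} {n : ℕ} (hb : 0 ≤ b) (hc : 0 ≤ c)
    (hC : 0 < C) (hr : 0 ≤ r) (hrn : r < n) :
    ∀ᶠ τ in atTop, c * (τ - b) ^ r < C * τ ^ n := by
  filter_upwards [eventually_gt_atTop b,
    (tendsto_rpow_atTop (sub_pos.2 hrn)).eventually_gt_atTop (c / C)] with τ hτb hτ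
  have hτ0 : 0 < τ := hb.trans_lt hτb
  calc c * (τ - b) ^ r ≤ c * τ ^ r := by gcongr; linarith
    _ < C * τ ^ ((n : ℝ) - r) * τ ^ r := by
      gcongr
      rwa [div_lt_iff₀' hC] at hτ
    _ = C * τ ^ n := by rw [mul_assoc, ← rpow_add hτ0, sub_add_cancel, rpow_natCast]

namespace VanDerWaals

/-- `deriv₁` and `deriv₂` are `p'` and `p''` for `p(τ) = K/(τ-b)^(γ+1) - a/τ²`. -/
noncomputable def deriv₁ (K a b γ τ : ℝ) : ℝ :=
  -(K * (γ + 1)) / (τ - b) ^ (γ + 2) + 2 * a / τ ^ 3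

noncomputable def deriv₂ (K a b γ τ : ℝ) : ℝ :=
  K * (γ + 1) * (γ + 2) / (τ - b) ^ (γ + 3) - 6 * a / τ ^ 4

variable {K a b γ τ : ℝ}

lemma two_mul_deriv₁_add_mul_deriv₂ (hτb : b < τ) (hτ : 0 < τ) :
    2 * deriv₁ K a b γ τ + τ * deriv₂ K a b γ τ =
      K * (γ + 1) * (γ * τ + 2 * b) / (τ - b) ^ (γ + 3) - 2 * a / τ ^ 3 := by
  have hs : 0 < τ - b := sub_pos.2 hτb
  have hpow : (τ - b) ^ (γ + 3) = (τ - b) ^ (γ + 2) * (τ - b) := by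
    rw [show γ + 3 = γ + 2 + 1 by ring, rpow_add_one hs.ne']
  have hX : 0 < (τ - b) ^ (γ + 2) := rpow_pos_of_pos hs _
  rw [deriv₁, deriv₂, hpow]
  field_simp
  ring

lemma deriv₁_neg (hK : 0 < K) (hγ : 0 ≤ γ) (hγ1 : γ ≤ 1) (hτb : b < τ) (hτ : 0 < τ)
    (hkey : 2 * a * (τ - b) ^ (γ + 2) < K * γ * (γ + 1) * τ ^ 3) :
    deriv₁ K a b γ τ < 0 := by
  have hX : 0 < (τ - b) ^ (γ + 2) := rpow_pos_of_pos (sub_pos.2 hτb) _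
  have : 2 * a / τ ^ 3 < K * (γ + 1) / (τ - b) ^ (γ + 2) := by
    rw [div_lt_div_iff₀ (by positivity) hX]
    have : 0 ≤ K * (γ + 1) * τ ^ 3 * (1 - γ) := by
      have := sub_nonneg.2 hγ1
      positivity
    linarith
  rw [deriv₁, neg_div]
  linarith

lemma two_mul_deriv₁_add_mul_deriv₂_pos (hK : 0 < K) (hγ : 0 ≤ γ) (hb : 0 ≤ b) (hτb : b < τ)
    (hkey : 2 * a * (τ - b) ^ (γ + 2) < K * γ * (γ + 1) * τ ^ 3) :
    0 < 2 * deriv₁ K a b γ τ + τ * deriv₂ K a b γ τ := by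
  have hs : 0 < τ - b := sub_pos.2 hτb
  have hτ : 0 < τ := hb.trans_lt hτb
  rw [two_mul_deriv₁_add_mul_deriv₂ hτb hτ, sub_pos,
    div_lt_div_iff₀ (by positivity) (rpow_pos_of_pos hs _),
    show γ + 3 = γ + 2 + 1 by ring, rpow_add_one hs.ne']
  calc 2 * a * ((τ - b) ^ (γ + 2) * (τ - b)) = 2 * a * (τ - b) ^ (γ + 2) * (τ - b) := by ring
    _ < K * γ * (γ + 1) * τ ^ 3 * (τ - b) := by gcongr
    _ ≤ K * γ * (γ + 1) * τ ^ 3 * τ + K * (γ + 1) * τ ^ 3 * (2 * b) := by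
      have : 0 ≤ K * γ * (γ + 1) * τ ^ 3 * b := by positivity
      have : 0 ≤ K * (γ + 1) * τ ^ 3 * (2 * b) := by positivity
      linarith
    _ = K * (γ + 1) * (γ * τ + 2 * b) * τ ^ 3 := by ring

end VanDerWaals

open VanDerWaals in
/-- For the van der Waals gas with `p(τ) = K/(τ−b)^(γ+1) − a/τ²`, there exists `τ₁ > b`
such that for all `τ > τ₁` the quantity `κ(τ) = −2p'(τ)/(2p'(τ) + τ p''(τ))` is positive. -/
theorem vdw_kappa_pos (K a b γ : ℝ) (hK : 0 < K) (ha : 0 < a) (hb : 0 < b)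
    (hγ : 0 < γ) (hγ1 : γ < 1) :
    ∃ τ₁ : ℝ, b < τ₁ ∧ ∀ τ : ℝ, τ₁ < τ →
      0 < (-2 * (-(K * (γ + 1)) / (τ - b) ^ (γ + 2) + 2 * a / τ ^ 3)) /
          (2 * (-(K * (γ + 1)) / (τ - b) ^ (γ + 2) + 2 * a / τ ^ 3) +
            τ * (K * (γ + 1) * (γ + 2) / (τ - b) ^ (γ + 3) - 6 * a / τ ^ 4)) := by
  have hkey : ∀ᶠ τ in atTop, 2 * a * (τ - b) ^ (γ + 2) < K * γ * (γ + 1) * τ ^ 3 :=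
    eventually_mul_sub_rpow_lt_mul_pow (n := 3) hb.le (by positivity) (by positivity)
      (by positivity) (by push_cast; linarith)
  obtain ⟨τ₁, hτ₁⟩ := (hkey.and (eventually_gt_atTop b)).exists_forall_of_atTop
  refine ⟨τ₁, (hτ₁ τ₁ le_rfl).2, fun τ hτ => ?_⟩
  obtain ⟨hkeyτ, hτb⟩ := hτ₁ τ hτ.le
  have hp' := deriv₁_neg hK hγ.le hγ1.le hτb (by linarith) hkeyτ
  have hden := two_mul_deriv₁_add_mul_deriv₂_pos hK hγ.le hb.le hτb hkeyτ
  show 0 < -2 * deriv₁ K a b γ τ / (2 * deriv₁ K a b γ τ + τ * deriv₂ K a b γ τ)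
  exact div_pos (by linarith) hden
end

section
/- For the van der Waals gas, there exists τ₁ > b such that for all τ > τ₁ the quantity m(τ) = (κ(τ)−1)/(κ(τ)+1) satisfies 0 < m(τ) < 1, where κ(τ) is as defined from the pressure p(τ) = K/(τ−b)^{γ+1} − a/τ². -/
/-- For the van der Waals gas, there exists `τ₁ > b` such that for all `τ > τ₁` the quantity
`m(τ) = (κ(τ)−1)/(κ(τ)+1)` satisfies `0 < m(τ) < 1`, where
`κ(τ) = −2p'(τ)/(2p'(τ)+τ p''(τ))` and `p(τ) = K/(τ−b)^(γ+1) − a/τ²`. -/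
theorem vdw_m_bounds (K a b γ : ℝ) (hK : 0 < K) (ha : 0 < a) (hb : 0 < b)
    (hγ : 0 < γ) (hγ1 : γ < 1) :
    ∃ τ₁ : ℝ, b < τ₁ ∧ ∀ τ : ℝ, τ₁ < τ →
      ∀ κ : ℝ,
        κ = (-2 * (-(K * (γ + 1)) / (τ - b) ^ (γ + 2) + 2 * a / τ ^ 3)) /
            (2 * (-(K * (γ + 1)) / (τ - b) ^ (γ + 2) + 2 * a / τ ^ 3) +
              τ * (K * (γ + 1) * (γ + 2) / (τ - b) ^ (γ + 3) - 6 * a / τ ^ 4)) →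
        0 < (κ - 1) / (κ + 1) ∧ (κ - 1) / (κ + 1) < 1 := by
  set c := K * (γ + 1) with hc_def
  have hc : 0 < c := by
    have : (0:ℝ) < γ + 1 := by linarith
    exact mul_pos hK this
  have h1γ : 0 < 1 - γ := by linarith
  have hq : (0:ℝ) < 2 * a / (c * γ) := by positivity
  set R := (2 * a / (c * γ)) ^ (1 / (1 - γ)) with hR_def
  have hR0 : 0 ≤ R := Real.rpow_nonneg hq.le _
  have hM0 : (0:ℝ) ≤ (γ + 2) * b / (1 - γ) := by positivity
  refine ⟨b + 1 + max ((γ + 2) * b / (1 - γ)) R, by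
    have := le_max_right ((γ + 2) * b / (1 - γ)) R
    linarith, ?_⟩
  intro τ hτ1 κ hκ
  set x := τ - b with hx_def
  have hxmax1 : (γ + 2) * b / (1 - γ) < x := by
    have := le_max_left ((γ + 2) * b / (1 - γ)) R
    simp only [hx_def]; linarith
  have hxR : R < x := by
    have := le_max_right ((γ + 2) * b / (1 - γ)) R
    simp only [hx_def]; linarith
  have hx : 0 < x := by simp only [hx_def]; linarith [le_max_left ((γ + 2) * b / (1 - γ)) R]
  have hτ0 : 0 < τ := by linarith
  have hxτ : x < τ := by simp only [hx_def]; linarith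
  have hτx : τ - x = b := by simp only [hx_def]; ring
  -- the master inequality
  have hxpow : 2 * a / (c * γ) < x ^ (1 - γ) := by
    have hRpow : R ^ (1 - γ) = 2 * a / (c * γ) := by
      rw [hR_def, ← Real.rpow_mul hq.le, one_div_mul_cancel h1γ.ne', Real.rpow_one]
    calc 2 * a / (c * γ) = R ^ (1 - γ) := hRpow.symm
      _ < x ^ (1 - γ) := Real.rpow_lt_rpow hR0 hxR h1γ
  have hX2 : 0 < x ^ (γ + 2) := Real.rpow_pos_of_pos hx _
  have hmaster : 2 * a * x ^ (γ + 2) < c * γ * x ^ (3:ℕ) := by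
    have h2a : 2 * a < c * γ * x ^ (1 - γ) := by
      rw [div_lt_iff₀ (by positivity)] at hxpow
      linarith [hxpow]
    have h3 : (x:ℝ) ^ (3:ℕ) = x ^ (γ + 2) * x ^ (1 - γ) := by
      rw [← Real.rpow_add hx, show γ + 2 + (1 - γ) = (3:ℝ) by ring,
        ← Real.rpow_natCast x 3]
      norm_num
    calc 2 * a * x ^ (γ + 2) < (c * γ * x ^ (1 - γ)) * x ^ (γ + 2) :=
          mul_lt_mul_of_pos_right h2a hX2
      _ = c * γ * x ^ (3:ℕ) := by rw [h3]; ring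
  have hτ3 : x ^ (3:ℕ) < τ ^ (3:ℕ) := by
    exact pow_lt_pow_left₀ hxτ hx.le (by norm_num)
  have hE : x ^ (γ + 3) = x ^ (γ + 2) * x := by
    rw [show γ + 3 = (γ + 2) + 1 by ring, Real.rpow_add_one hx.ne']
  rw [hE] at hκ
  set X2 := x ^ (γ + 2) with hX2def
  set Q := X2 * x * τ ^ 3 with hQ_def
  have hQ : 0 < Q := by positivity
  set Nκ := 2 * c * x * τ ^ 3 - 4 * a * (X2 * x) with hN_def
  set Dκ := c * ((γ + 2) * τ - 2 * x) * τ ^ 3 - 2 * a * (X2 * x) with hD_def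
  clear_value Dκ Nκ Q X2 x R c
  -- positivity facts
  have t1 : 2 * a * (X2 * x) < c * γ * x ^ (3:ℕ) * x :=
    by linarith [mul_lt_mul_of_pos_right hmaster hx]
  have t2 : c * γ * x ^ (3:ℕ) * x < c * γ * x * τ ^ 3 := by
    linarith [mul_lt_mul_of_pos_right hτ3 (mul_pos (mul_pos hc hγ) hx)]
  have hgap1 : c * ((γ + 2) * τ - 2 * x) * τ ^ 3
      = c * γ * x * τ ^ 3 + c * (γ + 2) * b * τ ^ 3 := by
    rw [← hτx]; ring
  have hDκ : 0 < Dκ := by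
    rw [hD_def, hgap1]
    have : 0 < c * (γ + 2) * b * τ ^ 3 := by positivity
    linarith
  have hx2' : (γ + 2) * b < (1 - γ) * x := by
    have := (div_lt_iff₀ h1γ).mp hxmax1
    linarith
  have hNsub : Dκ < Nκ := by
    have hgap2 : Nκ - Dκ = c * ((2 - γ) * x - (γ + 2) * b) * τ ^ 3 - 2 * a * (X2 * x) := by
      rw [hN_def, hD_def, ← hτx]; ring
    have h5 : c * x * τ ^ 3 ≤ c * ((2 - γ) * x - (γ + 2) * b) * τ ^ 3 := by
      have h0 : 0 ≤ (1 - γ) * x - (γ + 2) * b := by linarith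
      have : 0 ≤ c * ((1 - γ) * x - (γ + 2) * b) * τ ^ 3 :=
        mul_nonneg (mul_nonneg hc.le h0) (pow_pos hτ0 3).le
      linarith [this]
    have h6 : c * γ * x * τ ^ 3 < c * x * τ ^ 3 := by
      linarith [mul_pos (mul_pos (mul_pos hc h1γ) hx) (pow_pos hτ0 3)]
    have : 0 < Nκ - Dκ := by
      rw [hgap2]; linarith
    linarith
  -- rewrite κ
  have hNum_eq : -2 * (-c / X2 + 2 * a / τ ^ 3) = Nκ / Q := by
    rw [hN_def, hQ_def]
    field_simp
    ring
  have hDen_eq : 2 * (-c / X2 + 2 * a / τ ^ 3) + τ * (c * (γ + 2) / (X2 * x) - 6 * a / τ ^ 4)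
      = Dκ / Q := by
    rw [hD_def, hQ_def]
    field_simp
    ring
  rw [hNum_eq, hDen_eq] at hκ
  have hκ' : κ = Nκ / Dκ := by
    rw [hκ]
    field_simp
  have hκgt : 1 < κ := by
    rw [hκ']
    exact (one_lt_div hDκ).mpr hNsub
  have hk1 : 0 < κ - 1 := by linarith
  have hk2 : 0 < κ + 1 := by linarith
  exact ⟨div_pos hk1 hk2, (div_lt_one hk2).mpr (by linarith)⟩
end
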